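/- Every vector u ∈ A₅* that is not orthogonal to any root of A₅ satisfies u·u ≥ 35/2, with equality attained by v = (1/2)(−5,−3,−1,1,3,5) and its coordinate permutations. -/

import Mathlib

/-!
Pairing `u ∈ A₅*` with the roots `eᵢ - eⱼ ∈ A₅` makes all differences `uᵢ - uⱼ` integers, and
not being orthogonal to any root makes them nonzero. So `uᵢ = u₀ + bᵢ` with `b` injective and
integer-valued; sorting `b` gives `|bᵢ - bⱼ| ≥ |i - j|`, whence
`12 ‖u‖² = ∑ᵢⱼ (uᵢ - uⱼ)² ≥ ∑ᵢⱼ (i - j)² = 210` (the first equality uses `∑ uᵢ = 0`).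
-/

open Finset Function

lemma Fin.val_sub_le_sub_of_strictMono {n : ℕ} {g : Fin n → ℤ} (hg : StrictMono g) {i j : Fin n}
    (hij : i ≤ j) : (j : ℤ) - i ≤ g j - g i := by
  cases n with
  | zero => exact i.elim0
  | succ n =>
    have hmono : Monotone fun k : Fin (n + 1) => g k - k := by
      refine Fin.monotone_iff_le_succ.2 fun k => ?_
      have := hg (Fin.castSucc_lt_succ (i := k))
      simp only [Fin.val_castSucc, Fin.val_succ, Nat.cast_add, Nat.cast_one]
      omega
    linarith [hmono hij]

lemma Fin.sq_val_sub_le_sq_sub_of_strictMono {n : ℕ} {g : Fin n → ℤ} (hg : StrictMono g)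
    (i j : Fin n) : ((i : ℤ) - j) ^ 2 ≤ (g i - g j) ^ 2 := by
  rcases le_total i j with hij | hji
  · have := Fin.val_sub_le_sub_of_strictMono hg hij
    have : (i : ℤ) ≤ j := by exact_mod_cast hij
    nlinarith
  · have := Fin.val_sub_le_sub_of_strictMono hg hji
    have : (j : ℤ) ≤ i := by exact_mod_cast hji
    nlinarith

lemma Fin.sum_sum_sq_val_sub_le_of_injective {n : ℕ} {b : Fin n → ℤ} (hb : Injective b) :
    ∑ i : Fin n, ∑ j : Fin n, ((i : ℤ) - j) ^ 2 ≤ ∑ i, ∑ j, (b i - b j) ^ 2 := by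
  set σ := Tuple.sort b
  have hsorted : StrictMono (b ∘ σ) :=
    (Tuple.monotone_sort b).strictMono_of_injective (hb.comp σ.injective)
  calc ∑ i : Fin n, ∑ j : Fin n, ((i : ℤ) - j) ^ 2
      ≤ ∑ i, ∑ j, (b (σ i) - b (σ j)) ^ 2 :=
        sum_le_sum fun i _ => sum_le_sum fun j _ =>
          Fin.sq_val_sub_le_sq_sub_of_strictMono hsorted i j
    _ = ∑ i, ∑ j, (b i - b j) ^ 2 := by
        rw [← Equiv.sum_comp σ fun i => ∑ j, (b i - b j) ^ 2]
        exact sum_congr rfl fun i _ => Equiv.sum_comp σ fun j => (b (σ i) - b j) ^ 2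

lemma Finset.sum_sum_sub_sq {ι R : Type*} [CommRing R] (s : Finset ι) (f : ι → R) :
    ∑ i ∈ s, ∑ j ∈ s, (f i - f j) ^ 2 = 2 * (#s * ∑ i ∈ s, f i ^ 2 - (∑ i ∈ s, f i) ^ 2) := by
  simp only [sub_sq, sum_add_distrib, sum_sub_distrib, sum_const, nsmul_eq_mul, mul_assoc,
    ← mul_sum, ← sum_mul]
  ring

lemma sum_mul_sub_single_sub_single {ι R : Type*} [Fintype ι] [DecidableEq ι] [CommRing R]
    (u : ι → R) (i j : ι) :
    ∑ k, u k * ((Pi.single i 1 - Pi.single j 1 : ι → R) k) = u i - u j := by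
  simp [Pi.single_apply, mul_sub, sum_sub_distrib]

lemma exists_int_sub_eq_of_forall_int_pairing {ι : Type*} [Fintype ι] [DecidableEq ι] {u : ι → ℚ}
    (hdual : ∀ w : ι → ℚ, (∀ i, ∃ m : ℤ, w i = m) → ∑ i, w i = 0 → ∃ m : ℤ, ∑ i, u i * w i = m)
    (i j : ι) : ∃ m : ℤ, u i - u j = m := by
  obtain ⟨m, hm⟩ := hdual (Pi.single i 1 - Pi.single j 1)
    (fun k => ⟨(Pi.single i 1 - Pi.single j 1 : ι → ℤ) k, by simp [Pi.single_apply]⟩)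
    (by simp [sum_sub_distrib])
  exact ⟨m, by rwa [sum_mul_sub_single_sub_single] at hm⟩

lemma Fin.sum_sum_sq_val_sub_le_of_int_sub {n : ℕ} {u : Fin n → ℚ} (hu : Injective u)
    (hint : ∀ i j, ∃ m : ℤ, u i - u j = m) :
    ((∑ i : Fin n, ∑ j : Fin n, ((i : ℤ) - j) ^ 2 : ℤ) : ℚ) ≤ ∑ i, ∑ j, (u i - u j) ^ 2 := by
  cases n with
  | zero => simp
  | succ n =>
    choose b hb using fun i => hint i 0
    have hsub : ∀ i j, u i - u j = ((b i - b j : ℤ) : ℚ) := fun i j => by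
      push_cast
      linarith [hb i, hb j]
    have hb_inj : Injective b := fun i j hij => hu <| sub_eq_zero.mp <| by simp [hsub, hij]
    simp_rw [hsub]
    exact_mod_cast Fin.sum_sum_sq_val_sub_le_of_injective hb_inj

/-- Every vector of `A₅*` not orthogonal to any root has norm at least `35/2`,
with equality attained by `v = (1/2)(−5,−3,−1,1,3,5)` and its permutations. -/
theorem stmt6 (v : Fin 6 → ℚ)
    (hv : v = ![-5/2, -3/2, -1/2, 1/2, 3/2, 5/2]) :
    (∀ u : Fin 6 → ℚ, ∑ i, u i = 0 →
      (∀ w : Fin 6 → ℚ, (∀ i, ∃ m : ℤ, w i = (m : ℚ)) → ∑ i, w i = 0 →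
        ∃ m : ℤ, ∑ i, u i * w i = (m : ℚ)) →
      (∀ i j : Fin 6, i ≠ j →
        ∑ k, u k * ((Pi.single i 1 - Pi.single j 1 : Fin 6 → ℚ) k) ≠ 0) →
      35 / 2 ≤ ∑ i, u i * u i) ∧
    (∀ σ : Equiv.Perm (Fin 6), ∑ i, v (σ i) * v (σ i) = 35 / 2) := by
  refine ⟨fun u hsum hdual hroot => ?_, fun σ => ?_⟩
  · have hu : Injective u := fun i j hij => by
      by_contra hne
      exact hroot i j hne (by rw [sum_mul_sub_single_sub_single, hij, sub_self])
    have hbound := Fin.sum_sum_sq_val_sub_le_of_int_sub hu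
      (exists_int_sub_eq_of_forall_int_pairing hdual)
    have h210 : ∑ i : Fin 6, ∑ j : Fin 6, ((i : ℤ) - j) ^ 2 = 210 := by decide
    rw [h210, sum_sum_sub_sq, hsum] at hbound
    simp only [← sq]
    norm_num at hbound
    linarith
  · rw [Equiv.sum_comp σ fun i => v i * v i, hv]
    norm_num [Fin.sum_univ_succ]
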